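/- Let A be a binary treatment and Z a binary instrument, with potential outcomes Y₀, Y₁ and observed outcome Y = A·Y₁ + (1−A)·Y₀. Assume: (B1) E(Y₁ − Y₀ | A=1, Z=z) = β for z = 0,1 (homogeneous effect of treatment on the treated); and that the conditional law of Y₀ given (A=0, Z=z) is Gaussian with variance σ²(z) > 0 and the conditional density of Y₀ given (A=1, Z=z) is its exponential tilt by γ (homogeneous selection bias, B2). Then for each z ∈ {0,1}, E(Y | A=1, Z=z) − E(Y | A=0, Z=z) = β + γ·σ²(z). -/
import Mathlib


open MeasureTheory ProbabilityTheory NNReal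

open Real
open scoped ENNReal

lemma pdf_tilt (m : ℝ) (v : ℝ≥0) (hv : v ≠ 0) (γ x : ℝ) :
    gaussianPDFReal m v x * rexp (γ * x)
      = rexp (γ * m + γ ^ 2 * v / 2) * gaussianPDFReal (m + γ * v) v x := by
  have hv' : (v : ℝ) ≠ 0 := by exact_mod_cast hv
  simp only [gaussianPDFReal]
  rw [mul_assoc, ← Real.exp_add, mul_left_comm, ← Real.exp_add]
  congr 1
  field_simp
  ring

lemma gaussianReal_eq_withDensity (m : ℝ) (v : ℝ≥0) (hv : v ≠ 0) :
    gaussianReal m v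
      = volume.withDensity (fun x => ((gaussianPDFReal m v x).toNNReal : ℝ≥0∞)) := by
  rw [gaussianReal_of_var_ne_zero m hv]
  rfl

lemma gaussian_mean (m : ℝ) (v : ℝ≥0) (hv : v ≠ 0) :
    ∫ x, x ∂(gaussianReal m v) = m := by
  have hmeas : Measurable fun x => (gaussianPDFReal m v x).toNNReal :=
    (measurable_gaussianPDFReal m v).real_toNNReal
  rw [gaussianReal_eq_withDensity m v hv, integral_withDensity_eq_integral_smul hmeas]
  have hsmul : (fun x => (gaussianPDFReal m v x).toNNReal • x)
      = fun x => gaussianPDFReal m v x * x := by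
    ext x
    rw [NNReal.smul_def, Real.coe_toNNReal _ (gaussianPDFReal_nonneg m v x), smul_eq_mul]
  rw [hsmul, ← integral_add_right_eq_self (fun x => gaussianPDFReal m v x * x) m]
  have hpdf0 : ∀ x : ℝ, gaussianPDFReal m v (x + m) = gaussianPDFReal 0 v x := by
    intro x; rw [gaussianPDFReal_add, sub_self]
  simp_rw [hpdf0]
  have hvpos : (0 : ℝ) < v := lt_of_le_of_ne (by positivity) (by exact_mod_cast hv.symm)
  have hint0 : Integrable (fun x => gaussianPDFReal 0 v x * x) := by
    have hb : (0:ℝ) < (2 * (v:ℝ))⁻¹ := by positivity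
    have h := (integrable_mul_exp_neg_mul_sq hb).const_mul (√(2 * π * v))⁻¹
    refine h.congr (ae_of_all _ fun x => ?_)
    simp only [gaussianPDFReal, sub_zero]
    rw [neg_div, div_eq_inv_mul, ← neg_mul]
    ring
  have hintc : Integrable (fun x => gaussianPDFReal 0 v x * m) :=
    (integrable_gaussianPDFReal 0 v).mul_const m
  have hodd : ∫ x, gaussianPDFReal 0 v x * x = 0 := by
    have h := integral_neg_eq_self (fun x => gaussianPDFReal 0 v x * x) volume
    have heq : (fun x => gaussianPDFReal 0 v (-x) * (-x))
        = fun x => -(gaussianPDFReal 0 v x * x) := by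
      ext x
      simp only [gaussianPDFReal, sub_zero, neg_sq]
      ring
    rw [heq, integral_neg] at h
    linarith
  calc ∫ x, gaussianPDFReal 0 v x * (x + m)
      = ∫ x, (gaussianPDFReal 0 v x * x + gaussianPDFReal 0 v x * m) := by
        congr 1; ext x; ring
    _ = (∫ x, gaussianPDFReal 0 v x * x) + ∫ x, gaussianPDFReal 0 v x * m :=
        integral_add hint0 hintc
    _ = m := by
        rw [hodd, zero_add, integral_mul_const, integral_gaussianPDFReal_eq_one 0 hv, one_mul]

lemma gaussian_exp_integral (m : ℝ) (v : ℝ≥0) (hv : v ≠ 0) (γ : ℝ) :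
    ∫ x, rexp (γ * x) ∂(gaussianReal m v) = rexp (γ * m + γ ^ 2 * v / 2) := by
  have hmeas : Measurable fun x => (gaussianPDFReal m v x).toNNReal :=
    (measurable_gaussianPDFReal m v).real_toNNReal
  rw [gaussianReal_eq_withDensity m v hv, integral_withDensity_eq_integral_smul hmeas]
  have hsmul : (fun x => (gaussianPDFReal m v x).toNNReal • rexp (γ * x))
      = fun x => rexp (γ * m + γ ^ 2 * v / 2) * gaussianPDFReal (m + γ * v) v x := by
    ext x
    rw [NNReal.smul_def, Real.coe_toNNReal _ (gaussianPDFReal_nonneg m v x), smul_eq_mul,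
      pdf_tilt m v hv γ x]
  rw [hsmul, integral_const_mul, integral_gaussianPDFReal_eq_one _ hv, mul_one]

lemma gaussian_exp_integrable (m : ℝ) (v : ℝ≥0) (hv : v ≠ 0) (γ : ℝ) :
    Integrable (fun x => rexp (γ * x)) (gaussianReal m v) := by
  rw [gaussianReal_of_var_ne_zero m hv,
    integrable_withDensity_iff (measurable_gaussianPDF m v)
      (ae_of_all _ fun x => ENNReal.ofReal_lt_top)]
  have h : (fun x => rexp (γ * x) * (gaussianPDF m v x).toReal)
      = fun x => rexp (γ * m + γ ^ 2 * v / 2) * gaussianPDFReal (m + γ * v) v x := by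
    ext x
    rw [gaussianPDF, ENNReal.toReal_ofReal (gaussianPDFReal_nonneg m v x), mul_comm,
      pdf_tilt m v hv γ x]
  rw [h]
  exact (integrable_gaussianPDFReal _ _).const_mul _

lemma gaussian_tilted (m : ℝ) (v : ℝ≥0) (hv : v ≠ 0) (γ : ℝ) :
    (gaussianReal m v).tilted (fun y => γ * y) = gaussianReal (m + γ * v) v := by
  rw [Measure.tilted, gaussian_exp_integral m v hv γ,
    gaussianReal_of_var_ne_zero m hv, gaussianReal_of_var_ne_zero (m + γ * v) hv,
    ← withDensity_mul _ (measurable_gaussianPDF m v)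
      (by fun_prop :
        Measurable fun x => ENNReal.ofReal (rexp (γ * x) / rexp (γ * m + γ ^ 2 * v / 2)))]
  congr 1
  ext x
  simp only [Pi.mul_apply, gaussianPDF]
  rw [← ENNReal.ofReal_mul (gaussianPDFReal_nonneg m v x)]
  congr 1
  rw [mul_div_assoc', pdf_tilt m v hv γ x, mul_comm, mul_div_assoc,
    div_self (Real.exp_ne_zero _), mul_one]

lemma integrable_cond_aux {Ω : Type*} [MeasurableSpace Ω] (μ : Measure Ω) {f : Ω → ℝ}
    (hf : Integrable f μ) (s : Set Ω) (hs0 : μ s ≠ 0) : Integrable f (μ[|s]) := by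
  rw [ProbabilityTheory.cond]
  exact (hf.restrict).smul_measure (by simp [hs0])

lemma cond_ae_mem_aux {Ω : Type*} [MeasurableSpace Ω] (μ : Measure Ω) {s : Set Ω}
    (hs : MeasurableSet s) : ∀ᵐ ω ∂(μ[|s]), ω ∈ s := by
  rw [ProbabilityTheory.cond]
  exact Measure.ae_smul_measure (ae_restrict_mem hs) _



/-- Binary treatment `A`, binary instrument `Z`, potential outcomes `Y₀, Y₁`,
observed outcome `Y = A·Y₁ + (1−A)·Y₀`. Under (B1) homogeneous effect of treatment on the
treated, `E(Y₁ − Y₀ | A=1, Z=z) = β`, and (B2) the conditional law of `Y₀` given `(A=0, Z=z)`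
Gaussian with variance `σ²(z) > 0` and that given `(A=1, Z=z)` its exponential tilt by `γ`,
we have for each `z ∈ {0,1}`:
`E(Y | A=1, Z=z) − E(Y | A=0, Z=z) = β + γ·σ²(z)`. -/
theorem stmt_8 {Ω : Type*} [MeasurableSpace Ω] (μ : Measure Ω) [IsProbabilityMeasure μ]
    (Y₀ Y₁ A Z : Ω → ℝ) (hY₀ : Measurable Y₀) (hA : Measurable A) (hZ : Measurable Z)
    (hAbin : ∀ ω, A ω = 0 ∨ A ω = 1) (hZbin : ∀ ω, Z ω = 0 ∨ Z ω = 1)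
    (hY₀int : Integrable Y₀ μ) (hY₁int : Integrable Y₁ μ)
    (hZpos : ∀ z, z = 0 ∨ z = 1 → 0 < μ {ω | Z ω = z})
    (hpos : ∀ z, z = 0 ∨ z = 1 → 0 < (μ[|{ω | Z ω = z}]) {ω | A ω = 1})
    (hlt : ∀ z, z = 0 ∨ z = 1 → (μ[|{ω | Z ω = z}]) {ω | A ω = 1} < 1)
    (Y : Ω → ℝ) (hY : ∀ ω, Y ω = A ω * Y₁ ω + (1 - A ω) * Y₀ ω)
    (β γ : ℝ) (m : ℝ → ℝ) (σ : ℝ → ℝ≥0) (hσ : ∀ z, z = 0 ∨ z = 1 → 0 < σ z)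
    (hB1 : ∀ z, z = 0 ∨ z = 1 →
      (∫ ω, (Y₁ ω - Y₀ ω) ∂(μ[|{ω | A ω = 1 ∧ Z ω = z}])) = β)
    (hB2gauss : ∀ z, z = 0 ∨ z = 1 →
      (μ[|{ω | A ω = 0 ∧ Z ω = z}]).map Y₀ = gaussianReal (m z) (σ z ^ 2))
    (hB2tilt : ∀ z, z = 0 ∨ z = 1 →
      (μ[|{ω | A ω = 1 ∧ Z ω = z}]).map Y₀
        = ((μ[|{ω | A ω = 0 ∧ Z ω = z}]).map Y₀).tilted (fun y => γ * y)) :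
    ∀ z, z = 0 ∨ z = 1 →
      (∫ ω, Y ω ∂(μ[|{ω | A ω = 1 ∧ Z ω = z}]))
        - (∫ ω, Y ω ∂(μ[|{ω | A ω = 0 ∧ Z ω = z}]))
        = β + γ * (σ z : ℝ) ^ 2 := by
  intro z hz
  have hσz : σ z ≠ 0 := (hσ z hz).ne'
  have hvne : (σ z ^ 2 : ℝ≥0) ≠ 0 := pow_ne_zero 2 hσz
  have hZm : MeasurableSet {ω | Z ω = z} := hZ (measurableSet_singleton z)
  have hs1 : MeasurableSet {ω | A ω = 1 ∧ Z ω = z} :=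
    (hA (measurableSet_singleton 1)).inter (hZ (measurableSet_singleton z))
  have hs0 : MeasurableSet {ω | A ω = 0 ∧ Z ω = z} :=
    (hA (measurableSet_singleton 0)).inter (hZ (measurableSet_singleton z))
  have hZne : μ {ω | Z ω = z} ≠ 0 := (hZpos z hz).ne'
  have hPM : IsProbabilityMeasure (μ[|{ω | Z ω = z}]) := cond_isProbabilityMeasure hZne
  have hμ1 : μ {ω | A ω = 1 ∧ Z ω = z} ≠ 0 := by
    have h := hpos z hz
    rw [cond_apply hZm] at h
    intro h0
    have he : {ω | Z ω = z} ∩ {ω | A ω = 1} = {ω | A ω = 1 ∧ Z ω = z} := by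
      ext ω; simp [Set.mem_inter_iff, and_comm]
    rw [he, h0, mul_zero] at h
    exact lt_irrefl _ h
  have hμ0 : μ {ω | A ω = 0 ∧ Z ω = z} ≠ 0 := by
    have h := hlt z hz
    have hcompl : {ω | A ω = 0} = {ω | A ω = 1}ᶜ := by
      ext ω
      simp only [Set.mem_setOf_eq, Set.mem_compl_iff]
      rcases hAbin ω with h0 | h1
      · simp [h0]
      · simp [h1]
    have h2 : 0 < (μ[|{ω | Z ω = z}]) {ω | A ω = 0} := by
      rw [hcompl, prob_compl_eq_one_sub (show MeasurableSet {ω | A ω = 1} from hA (measurableSet_singleton 1))]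
      exact tsub_pos_of_lt h
    rw [cond_apply hZm] at h2
    intro h0
    have he : {ω | Z ω = z} ∩ {ω | A ω = 0} = {ω | A ω = 0 ∧ Z ω = z} := by
      ext ω; simp [Set.mem_inter_iff, and_comm]
    rw [he, h0, mul_zero] at h2
    exact lt_irrefl _ h2
  set μ1 := μ[|{ω | A ω = 1 ∧ Z ω = z}] with hμ1def
  set μ0 := μ[|{ω | A ω = 0 ∧ Z ω = z}] with hμ0def
  have hY0i1 : Integrable Y₀ μ1 := integrable_cond_aux μ hY₀int _ hμ1
  have hY1i1 : Integrable Y₁ μ1 := integrable_cond_aux μ hY₁int _ hμ1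
  have hae1 : ∀ᵐ ω ∂μ1, Y ω = Y₁ ω := by
    filter_upwards [cond_ae_mem_aux μ hs1] with ω hω
    rw [hY ω, hω.1]; ring
  have hae0 : ∀ᵐ ω ∂μ0, Y ω = Y₀ ω := by
    filter_upwards [cond_ae_mem_aux μ hs0] with ω hω
    rw [hY ω, hω.1]; ring
  have hmap0 : ∫ ω, Y₀ ω ∂μ0 = m z := by
    have h := integral_map (μ := μ0) hY₀.aemeasurable
      (f := fun y : ℝ => y) measurable_id.aestronglyMeasurable
    rw [← h, hB2gauss z hz, gaussian_mean (m z) _ hvne]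
  have hmap1 : ∫ ω, Y₀ ω ∂μ1 = m z + γ * ((σ z ^ 2 : ℝ≥0) : ℝ) := by
    have h := integral_map (μ := μ1) hY₀.aemeasurable
      (f := fun y : ℝ => y) measurable_id.aestronglyMeasurable
    rw [← h, hB2tilt z hz, hB2gauss z hz, gaussian_tilted (m z) _ hvne γ,
      gaussian_mean _ _ hvne]
  have hB := hB1 z hz
  rw [← hμ1def, integral_sub hY1i1 hY0i1] at hB
  rw [integral_congr_ae hae1, integral_congr_ae hae0, hmap0]
  have hsplit : ∫ ω, Y₁ ω ∂μ1 = β + ∫ ω, Y₀ ω ∂μ1 := by linarith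
  rw [hsplit, hmap1]
  push_cast
  ring
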